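/- For all n ≥ 0, the adjoining singular word satisfies v_{n-1} = (w_{n-1} v_{n-2})^{d_{n+1}-1} w_{n-1}, where u^k denotes the k-fold concatenation of u. -/

import Mathlib

/-!
Let `ℓ n` be the letter prepended to `s n` to form `w n`. As `s n` ends in `s (n - 2)`, its last
letter is `ℓ (n + 1) = ℓ (n - 1)`. So moving the last letter of `s n` to the front gives
`w (n - 1) v (n - 2)`, while `v (n - 1)` is `ℓ (n - 1)` followed by `(s n)^k` and by `s (n - 1)`
without its last letter; the conjugation identity `ℓ (x ℓ)^k = (ℓ x)^k ℓ` finishes the proof.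
-/

/-- Letters: `a` is `false`, `b` is `true`. -/
abbrev Word := List Bool

/-- `wpow w k` is the `k`-fold concatenation `w^k`. -/
def wpow (w : Word) (k : ℕ) : Word := (List.replicate k w).flatten

lemma wpow_succ (u : Word) (k : ℕ) : wpow u (k + 1) = u ++ wpow u k := by
  simp [wpow, List.replicate_succ]

lemma append_wpow_append (L X : Word) (k : ℕ) :
    L ++ wpow (X ++ L) k = wpow (L ++ X) k ++ L := by
  induction k with
  | zero => simp [wpow]
  | succ k ih => simp only [wpow_succ, List.append_assoc, ih]

lemma List.dropLast_append_cons_dropLast {α : Type*} {x y : List α} {c : α}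
    (hx : x.getLast? = some c) (hy : y ≠ []) :
    x.dropLast ++ c :: y.dropLast = (x ++ y).dropLast := by
  rw [dropLast_append_of_ne_nil hy, ← dropLast_append_getLast? c hx]
  simp

lemma cons_dropLast_wpow_append {x y : Word} {c : Bool} (hx : x.getLast? = some c)
    (hy : y ≠ []) (k : ℕ) :
    c :: (wpow x k ++ y).dropLast = wpow (c :: x.dropLast) k ++ c :: y.dropLast := by
  rw [List.dropLast_append_of_ne_nil hy, ← List.dropLast_append_getLast? c hx,
    List.dropLast_concat, ← List.singleton_append, ← List.append_assoc, append_wpow_append]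
  simp

-- `ℓ n`: the first letter of `w n`, and the last letter of `s (n - 1)` and of `s (n + 1)`.
def letter (n : ℤ) : Bool := if Odd n then false else true

lemma ite_odd_eq_singleton_letter (n : ℤ) :
    (if Odd n then [false] else [true]) = [letter n] := by
  unfold letter; split <;> rfl

@[simp] lemma letter_add_two (n : ℤ) : letter (n + 2) = letter n := by
  simp [letter, parity_simps]

lemma getLast?_eq_letter (d : ℤ → ℕ) (s : ℤ → Word)
    (hs1 : s (-1) = [true]) (hs0 : s 0 = [false])
    (hs : ∀ n : ℤ, 1 ≤ n → s n = wpow (s (n - 1)) (d n) ++ s (n - 2))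
    (n : ℤ) (hn : -1 ≤ n) : (s n).getLast? = some (letter (n + 1)) := by
  have two_step : ∀ m : ℕ, (s (m - 1)).getLast? = some (letter m) ∧
      (s m).getLast? = some (letter (m + 1)) := by
    intro m
    induction m with
    | zero => simp [hs1, hs0, letter]
    | succ m ih =>
      refine ⟨by simpa using ih.2, ?_⟩
      have hne : s (m - 1) ≠ [] := List.ne_nil_of_mem (List.mem_of_getLast? ih.1)
      rw [hs _ (by omega), show (m + 1 : ℕ) - (2 : ℤ) = m - 1 by push_cast; ring,
        List.getLast?_append_of_ne_nil _ hne, ih.1]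
      push_cast
      rw [add_assoc, one_add_one_eq_two, letter_add_two]
  obtain ⟨m, rfl⟩ : ∃ m : ℕ, n = m - 1 := ⟨(n + 1).toNat, by omega⟩
  simpa using (two_step m).1

lemma w_sub_one_eq_cons (s w : ℤ → Word) (hs1 : s (-1) = [true])
    (hw : ∀ n : ℤ, 0 ≤ n → w n = (if Odd n then [false] else [true]) ++ (s n).dropLast)
    (hwm1 : w (-1) = [false]) (n : ℤ) (hn : 0 ≤ n) :
    w (n - 1) = letter (n - 1) :: (s (n - 1)).dropLast := by
  rcases hn.eq_or_lt with rfl | hn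
  · simp [hwm1, hs1, letter]
  · rw [hw _ (by omega), ite_odd_eq_singleton_letter, List.singleton_append]

lemma w_sub_one_append_v_sub_two (d : ℤ → ℕ) (s : ℤ → Word)
    (hd : ∀ n : ℤ, 1 ≤ n → 1 ≤ d n)
    (hs1 : s (-1) = [true]) (hs0 : s 0 = [false])
    (hs : ∀ n : ℤ, 1 ≤ n → s n = wpow (s (n - 1)) (d n) ++ s (n - 2))
    (w : ℤ → Word)
    (hw : ∀ n : ℤ, 0 ≤ n → w n = (if Odd n then [false] else [true]) ++ (s n).dropLast)
    (hwm1 : w (-1) = [false])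
    (v : ℤ → Word)
    (hv : ∀ n : ℤ, -1 ≤ n → v n = (if Odd n then [false] else [true]) ++ (wpow (s (n + 1)) (d (n + 2) - 1) ++ s n).dropLast)
    (hvm2 : v (-2) = []) (n : ℤ) (hn : 0 ≤ n) :
    w (n - 1) ++ v (n - 2) = letter (n - 1) :: (s n).dropLast := by
  rcases hn.eq_or_lt with rfl | hn
  · simp [hwm1, hvm2, hs0, letter]
  have hsn : s n = s (n - 1) ++ (wpow (s (n - 1)) (d n - 1) ++ s (n - 2)) := by
    rw [hs n hn, ← List.append_assoc, ← wpow_succ, Nat.sub_add_cancel (hd n hn)]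
  have hlast : (s (n - 1)).getLast? = some (letter (n - 2)) := by
    rw [getLast?_eq_letter d s hs1 hs0 hs _ (by omega), show n - 1 + 1 = n - 2 + 2 by ring,
      letter_add_two]
  have hne : s (n - 2) ≠ [] :=
    List.ne_nil_of_mem (List.mem_of_getLast? (getLast?_eq_letter d s hs1 hs0 hs _ (by omega)))
  rw [w_sub_one_eq_cons s w hs1 hw hwm1 n (by omega), hv _ (by omega),
    show n - 2 + 1 = n - 1 by ring, show n - 2 + 2 = n by ring, ite_odd_eq_singleton_letter,
    List.singleton_append, List.cons_append, List.dropLast_append_cons_dropLast hlast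
      (List.append_ne_nil_of_right_ne_nil _ hne), ← hsn]

theorem adjoining_singular_word_formula_general (d : ℤ → ℕ) (s : ℤ → Word)
    (hd : ∀ n : ℤ, 1 ≤ n → 1 ≤ d n)
    (hs1 : s (-1) = [true]) (hs0 : s 0 = [false])
    (hs : ∀ n : ℤ, 1 ≤ n → s n = wpow (s (n - 1)) (d n) ++ s (n - 2))
    (w : ℤ → Word)
    (hw : ∀ n : ℤ, 0 ≤ n → w n = (if Odd n then [false] else [true]) ++ (s n).dropLast)
    (hwm1 : w (-1) = [false])
    (v : ℤ → Word)
    (hv : ∀ n : ℤ, -1 ≤ n → v n = (if Odd n then [false] else [true]) ++ (wpow (s (n + 1)) (d (n + 2) - 1) ++ s n).dropLast)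
    (hvm2 : v (-2) = []) :
    ∀ n : ℤ, 0 ≤ n →
      v (n - 1) = wpow (w (n - 1) ++ v (n - 2)) (d (n + 1) - 1) ++ w (n - 1) := by
  intro n hn
  have hlast : (s n).getLast? = some (letter (n - 1)) := by
    rw [getLast?_eq_letter d s hs1 hs0 hs n (by omega), show n + 1 = n - 1 + 2 by ring,
      letter_add_two]
  have hne : s (n - 1) ≠ [] :=
    List.ne_nil_of_mem (List.mem_of_getLast? (getLast?_eq_letter d s hs1 hs0 hs _ (by omega)))
  rw [hv _ (by omega), show n - 1 + 1 = n by ring, show n - 1 + 2 = n + 1 by ring,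
    ite_odd_eq_singleton_letter, List.singleton_append, cons_dropLast_wpow_append hlast hne,
    w_sub_one_append_v_sub_two d s hd hs1 hs0 hs w hw hwm1 v hv hvm2 n hn,
    w_sub_one_eq_cons s w hs1 hw hwm1 n hn]

/-- For all `n ≥ 0`, `vₙ₋₁ = (wₙ₋₁ vₙ₋₂)^(dₙ₊₁ - 1) wₙ₋₁`. -/
theorem adjoining_singular_word_formula (d : ℤ → ℕ) (s : ℤ → Word)
    (hd : ∀ n : ℤ, 1 ≤ n → 1 ≤ d n)
    (hs1 : s (-1) = [true]) (hs0 : s 0 = [false])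
    (hs : ∀ n : ℤ, 1 ≤ n → s n = wpow (s (n - 1)) (d n) ++ s (n - 2))
    (w : ℤ → Word)
    (hw : ∀ n : ℤ, 0 ≤ n → w n = (if Odd n then [false] else [true]) ++ (s n).dropLast)
    (hwm1 : w (-1) = [false]) (hwm2 : w (-2) = [])
    (v : ℤ → Word)
    (hv : ∀ n : ℤ, -1 ≤ n → v n = (if Odd n then [false] else [true]) ++ (wpow (s (n + 1)) (d (n + 2) - 1) ++ s n).dropLast)
    (hvm2 : v (-2) = []) :
    ∀ n : ℤ, 0 ≤ n →
      v (n - 1) = wpow (w (n - 1) ++ v (n - 2)) (d (n + 1) - 1) ++ w (n - 1) :=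
  adjoining_singular_word_formula_general d s hd hs1 hs0 hs w hw hwm1 v hv hvm2
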